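/- Logical entropy of the post-measurement state: let π = {B_1,...,B_m} be a partition of Fin n and S ⊆ Fin n with Pr(S) > 0, and set ρ(π↾S) := ∑_j P_{B_j} · ρ(ΣS) · P_{B_j}. Then h(ρ(π↾S)) = 1 − ∑_{j=1}^m (Pr(B_j ∩ S)/Pr(S))². -/
import Mathlib


open Matrix BigOperators

/-- `Pr p S = ∑_{i ∈ S} p i`, the probability of the event `S`. -/
noncomputable def Pr {n : ℕ} (p : Fin n → ℝ) (S : Finset (Fin n)) : ℝ :=
  ∑ i ∈ S, p i

/-- The superposition density matrix `ρ(ΣS)`: entry `(i,k)` is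
`√(p i * p k) / Pr p S` if `i ∈ S` and `k ∈ S`, and `0` otherwise. -/
noncomputable def rhoSigma {n : ℕ} (p : Fin n → ℝ) (S : Finset (Fin n)) :
    Matrix (Fin n) (Fin n) ℝ :=
  Matrix.of fun i k =>
    if i ∈ S ∧ k ∈ S then Real.sqrt (p i * p k) / Pr p S else 0

/-- The classical density matrix `ρ(ΔS)`: diagonal entry `(i,i)` is
`p i / Pr p S` if `i ∈ S`, all other entries are `0`. -/
noncomputable def rhoDelta {n : ℕ} (p : Fin n → ℝ) (S : Finset (Fin n)) :
    Matrix (Fin n) (Fin n) ℝ :=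
  Matrix.of fun i k =>
    if i = k ∧ i ∈ S then p i / Pr p S else 0

/-- The diagonal projection matrix `P_T`: entry `(i,i)` is `1` if `i ∈ T`, else `0`. -/
def projMat {n : ℕ} (T : Finset (Fin n)) : Matrix (Fin n) (Fin n) ℝ :=
  Matrix.of fun i k => if i = k ∧ i ∈ T then 1 else 0

lemma projMat_mul_apply {n : ℕ} (T : Finset (Fin n)) (A : Matrix (Fin n) (Fin n) ℝ)
    (i k : Fin n) : (projMat T * A) i k = if i ∈ T then A i k else 0 := by
  simp [projMat, Matrix.mul_apply, ite_and]

lemma mul_projMat_apply {n : ℕ} (T : Finset (Fin n)) (A : Matrix (Fin n) (Fin n) ℝ)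
    (i k : Fin n) : (A * projMat T) i k = if k ∈ T then A i k else 0 := by
  simp [projMat, Matrix.mul_apply, ite_and]

/-- Logical entropy of the post-measurement state:
h(ρ(π↾S)) = 1 - ∑_j (Pr(B_j ∩ S)/Pr(S))². -/
theorem logicalEntropy_postMeasurement (n : ℕ) (hn : 1 ≤ n) (p : Fin n → ℝ)
    (hp0 : ∀ i, 0 ≤ p i) (hp1 : ∑ i, p i = 1)
    (m : ℕ) (B : Fin m → Finset (Fin n))
    (hdisj : ∀ j j' : Fin m, j ≠ j' → Disjoint (B j) (B j'))
    (hne : ∀ j, (B j).Nonempty)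
    (hcover : ∀ i : Fin n, ∃ j, i ∈ B j)
    (S : Finset (Fin n)) (hS : 0 < Pr p S) :
    1 - (((∑ j, projMat (B j) * rhoSigma p S * projMat (B j)) *
          (∑ j, projMat (B j) * rhoSigma p S * projMat (B j))).trace) =
      1 - ∑ j, (Pr p (B j ∩ S) / Pr p S) ^ 2 := by
  congr 1
  choose f hf using hcover
  have hmem : ∀ (i : Fin n) (j : Fin m), i ∈ B j ↔ f i = j := by
    intro i j
    constructor
    · intro h
      by_contra hne'
      exact Finset.disjoint_left.mp (hdisj j (f i) fun e => hne' e.symm) h (hf i)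
    · rintro rfl; exact hf i
  set ρ := rhoSigma p S with hρ
  set M := ∑ j, projMat (B j) * ρ * projMat (B j) with hM
  have hMapply : ∀ i k, M i k = if f i = f k then ρ i k else 0 := by
    intro i k
    rw [hM, Matrix.sum_apply]
    have : ∀ j, (projMat (B j) * ρ * projMat (B j)) i k
        = if f i = j ∧ f k = j then ρ i k else 0 := by
      intro j
      rw [mul_projMat_apply, projMat_mul_apply]
      simp only [hmem]
      by_cases h1 : f i = j <;> by_cases h2 : f k = j <;> simp [h1, h2]
    simp_rw [this, ite_and]
    rw [Finset.sum_ite_eq (Finset.univ) (f i) (fun j => if f k = j then ρ i k else 0)]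
    simp only [Finset.mem_univ, if_true]
    by_cases h : f i = f k
    · simp [h]
    · have h' : ¬ f k = f i := fun e => h e.symm
      simp [h, h']
  have hρmul : ∀ i k, ρ i k * ρ k i =
      if i ∈ S ∧ k ∈ S then p i * p k / (Pr p S * Pr p S) else 0 := by
    intro i k
    by_cases h : i ∈ S ∧ k ∈ S
    · simp only [hρ, rhoSigma, Matrix.of_apply]
      rw [if_pos h, if_pos (And.intro h.2 h.1), if_pos h, div_mul_div_comm,
        mul_comm (p k) (p i), Real.mul_self_sqrt (mul_nonneg (hp0 i) (hp0 k))]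
    · have h' : ¬ (k ∈ S ∧ i ∈ S) := fun hh => h ⟨hh.2, hh.1⟩
      simp [hρ, rhoSigma, h, h']
  rw [Matrix.trace]
  simp_rw [Matrix.diag_apply, Matrix.mul_apply, hMapply]
  have key : ∀ i k : Fin n,
      (if f i = f k then ρ i k else 0) * (if f k = f i then ρ k i else 0)
      = if f i = f k then (if i ∈ S ∧ k ∈ S then p i * p k / (Pr p S * Pr p S) else 0) else 0 := by
    intro i k
    by_cases h : f i = f k
    · simp [h, hρmul]
    · have h' : ¬ f k = f i := fun e => h e.symm
      simp [h, h']
  simp_rw [key]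
  rw [← Finset.sum_fiberwise Finset.univ f
    (fun i => ∑ k, if f i = f k then (if i ∈ S ∧ k ∈ S then p i * p k / (Pr p S * Pr p S) else 0) else 0)]
  apply Finset.sum_congr rfl
  intro j _
  have hfib : Finset.univ.filter (fun i => f i = j) = B j := by
    ext i; simp [hmem]
  rw [hfib]
  have inner : ∀ i ∈ B j,
      (∑ k, if f i = f k then (if i ∈ S ∧ k ∈ S then p i * p k / (Pr p S * Pr p S) else 0) else 0)
      = if i ∈ S then ∑ k ∈ B j ∩ S, p i * p k / (Pr p S * Pr p S) else 0 := by
    intro i hi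
    have hfi : f i = j := (hmem i j).mp hi
    by_cases hiS : i ∈ S
    · rw [if_pos hiS, ← Finset.univ_inter (B j ∩ S), ← Finset.sum_ite_mem]
      apply Finset.sum_congr rfl
      intro k _
      by_cases hk : k ∈ B j ∩ S
      · obtain ⟨hkB, hkS⟩ := Finset.mem_inter.mp hk
        rw [if_pos hk, if_pos (hfi.trans ((hmem k j).mp hkB).symm), if_pos ⟨hiS, hkS⟩]
      · rw [if_neg hk]
        by_cases hfk : f i = f k
        · rw [if_pos hfk]
          have hkB : k ∈ B j := (hmem k j).mpr (hfk.symm.trans hfi)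
          rw [if_neg (fun hh => hk (Finset.mem_inter.mpr ⟨hkB, hh.2⟩))]
        · rw [if_neg hfk]
    · rw [if_neg hiS]
      apply Finset.sum_eq_zero
      intro k _
      simp [hiS]
  rw [Finset.sum_congr rfl inner, Finset.sum_ite_mem, Pr, div_pow, sq, sq]
  rw [show (Pr p (B j ∩ S) * Pr p (B j ∩ S))
      = ∑ i ∈ B j ∩ S, ∑ k ∈ B j ∩ S, p i * p k from Finset.sum_mul_sum _ _ _ _]
  rw [Finset.sum_div]
  exact Finset.sum_congr rfl fun i _ => by rw [Finset.sum_div]
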